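/- Let G be a digraph with nonnegative edge lengths, let Δ > 0 and β ≥ 0, and let F be a random subset of E(G) such that for every edge (u,v) ∈ E(G), Pr[(u,v) ∈ F] ≤ β·d_G(u,v)/Δ. Let R be the (random) quasipartition induced by F. Then for all u′,v′ ∈ V(G) such that v′ is reachable from u′ in G, Pr[(u′,v′) ∉ R] ≤ β·d_G(u′,v′)/Δ. -/

import Mathlib

/-!
Any walk `p` from `u'` to `v'` that survives the deletion of `F` witnesses reachability, so
`v'` is unreachable only if `F` cuts an edge of `p`. By the union bound and `d_G(u,v) ≤ len(u,v)`
on edges, this happens with probability at most `(β/Δ)·len(p)`. Since `Δ > 0` the rate `β/Δ` is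
finite, so multiplying by it commutes with the infimum over walks, which gives `(β/Δ)·d_G(u',v')`.
-/

open scoped ENNReal NNReal
open MeasureTheory

/-- A digraph on a vertex type `V`: an adjacency (edge) relation together with a
nonnegative length for each edge. -/
structure WDigraph (V : Type) where
  Adj : V → V → Prop
  len : V → V → ℝ≥0

namespace WDigraph

variable {V : Type}

/-- `G.IsWalk u v p` : `p` is the list of vertices of a directed walk from `u` to `v` in `G`. -/
def IsWalk (G : WDigraph V) (u v : V) (p : List V) : Prop :=
  p.Chain' G.Adj ∧ p.head? = some u ∧ p.getLast? = some v

/-- The total length of a walk, given by its list of vertices. -/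
def walkLen (G : WDigraph V) (p : List V) : ℝ≥0 :=
  ((p.zip p.tail).map fun e => G.len e.1 e.2).sum

/-- The shortest-path quasimetric of `G`. -/
noncomputable def dist (G : WDigraph V) (u v : V) : ℝ≥0∞ :=
  ⨅ (p : List V) (_ : G.IsWalk u v p), (G.walkLen p : ℝ≥0∞)

/-- `v` is reachable from `u` in `G` after deleting the edges in `F`. -/
def ReachAvoiding (G : WDigraph V) (F : Set (V × V)) (u v : V) : Prop :=
  ∃ p : List V, G.IsWalk u v p ∧ ∀ e ∈ p.zip p.tail, e ∉ F

end WDigraph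

theorem List.IsChain.rel_of_mem_zip_tail {α : Type*} {R : α → α → Prop} {l : List α}
    (h : l.IsChain R) {e : α × α} (he : e ∈ l.zip l.tail) : R e.1 e.2 := by
  induction h with
  | nil => simp at he
  | singleton => simp at he
  | cons_cons hab _ ih =>
    rcases List.mem_cons.mp he with rfl | he
    · exact hab
    · exact ih he

theorem measure_setOf_exists_mem_list_le {α ι F : Type*} [FunLike F (Set α) ℝ≥0∞]
    [OuterMeasureClass F α] (μ : F) (s : ι → Set α) (l : List ι) :
    μ {x | ∃ i ∈ l, x ∈ s i} ≤ (l.map fun i => μ (s i)).sum := by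
  induction l with
  | nil => simp
  | cons a t ih =>
    have hunion : {x | ∃ i ∈ a :: t, x ∈ s i} = s a ∪ {x | ∃ i ∈ t, x ∈ s i} := by
      ext x
      simp
    calc μ {x | ∃ i ∈ a :: t, x ∈ s i}
        ≤ μ (s a) + μ {x | ∃ i ∈ t, x ∈ s i} := hunion ▸ measure_union_le _ _
      _ ≤ ((a :: t).map fun i => μ (s i)).sum := by
        rw [List.map_cons, List.sum_cons]
        gcongr

namespace WDigraph

variable {V : Type} {G : WDigraph V}

theorem IsWalk.adj_of_mem_zip_tail {u v : V} {p : List V} (hp : G.IsWalk u v p)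
    {e : V × V} (he : e ∈ p.zip p.tail) : G.Adj e.1 e.2 :=
  List.IsChain.rel_of_mem_zip_tail hp.1 he

theorem dist_le_walkLen {u v : V} {p : List V} (hp : G.IsWalk u v p) :
    G.dist u v ≤ G.walkLen p :=
  iInf₂_le p hp

theorem dist_le_len {u v : V} (h : G.Adj u v) : G.dist u v ≤ G.len u v := by
  have hw : G.IsWalk u v [u, v] := ⟨List.isChain_pair.mpr h, rfl, rfl⟩
  simpa [walkLen] using dist_le_walkLen hw

theorem coe_walkLen (p : List V) :
    (G.walkLen p : ℝ≥0∞) = ((p.zip p.tail).map fun e => (G.len e.1 e.2 : ℝ≥0∞)).sum := by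
  rw [walkLen]
  exact (map_list_sum ENNReal.ofNNRealHom _).trans (by rw [List.map_map]; rfl)

theorem le_mul_dist {u v : V} {c x : ℝ≥0∞} (hc : c ≠ ∞) (hreach : ∃ p, G.IsWalk u v p)
    (h : ∀ p, G.IsWalk u v p → x ≤ c * G.walkLen p) : x ≤ c * G.dist u v := by
  obtain ⟨p, hp⟩ := hreach
  have : Nonempty {p // G.IsWalk u v p} := ⟨⟨p, hp⟩⟩
  rw [dist, iInf_subtype', ENNReal.mul_iInf (by simp [hc])]
  exact le_iInf fun q => h q.1 q.2

section Random

variable {Ω : Type} [MeasurableSpace Ω] (μ : Measure Ω) (F : Ω → Set (V × V))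

theorem measure_not_reachAvoiding_le_sum {u v : V} {p : List V} (hp : G.IsWalk u v p) :
    μ {ω | ¬ G.ReachAvoiding (F ω) u v} ≤ ((p.zip p.tail).map fun e => μ {ω | e ∈ F ω}).sum := by
  have hcut : {ω | ¬ G.ReachAvoiding (F ω) u v} ⊆ {ω | ∃ e ∈ p.zip p.tail, e ∈ F ω} :=
    fun ω hω => by_contra fun h => hω ⟨p, hp, fun e he hF => h ⟨e, he, hF⟩⟩
  exact (measure_mono hcut).trans (measure_setOf_exists_mem_list_le μ (fun e => {ω | e ∈ F ω}) _)

theorem measure_not_reachAvoiding_le_mul_walkLen {c : ℝ≥0∞}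
    (hcut : ∀ u v, G.Adj u v → μ {ω | (u, v) ∈ F ω} ≤ c * G.dist u v)
    {u v : V} {p : List V} (hp : G.IsWalk u v p) :
    μ {ω | ¬ G.ReachAvoiding (F ω) u v} ≤ c * G.walkLen p := by
  calc μ {ω | ¬ G.ReachAvoiding (F ω) u v}
      ≤ ((p.zip p.tail).map fun e => μ {ω | e ∈ F ω}).sum :=
        measure_not_reachAvoiding_le_sum μ F hp
    _ ≤ ((p.zip p.tail).map fun e => c * (G.len e.1 e.2 : ℝ≥0∞)).sum := by
        refine List.sum_le_sum fun e he => ?_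
        have hadj := hp.adj_of_mem_zip_tail he
        exact (hcut e.1 e.2 hadj).trans (mul_le_mul_right (dist_le_len hadj) c)
    _ = c * G.walkLen p := by rw [List.sum_map_mul_left, coe_walkLen]

theorem measure_not_reachAvoiding_le_mul_dist {c : ℝ≥0∞} (hc : c ≠ ∞)
    (hcut : ∀ u v, G.Adj u v → μ {ω | (u, v) ∈ F ω} ≤ c * G.dist u v)
    {u v : V} (hreach : ∃ p, G.IsWalk u v p) :
    μ {ω | ¬ G.ReachAvoiding (F ω) u v} ≤ c * G.dist u v :=
  le_mul_dist hc hreach fun _ hp => measure_not_reachAvoiding_le_mul_walkLen μ F hcut hp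

end Random

end WDigraph

theorem induced_quasipartition_probability_general {V : Type} (G : WDigraph V)
    (Δ β : ℝ) (hΔ : 0 < Δ)
    {Ω : Type} [MeasurableSpace Ω] (μ : Measure Ω)
    (F : Ω → Set (V × V))
    (hcut : ∀ u v : V, G.Adj u v →
      μ {ω | (u, v) ∈ F ω} ≤ ENNReal.ofReal β * G.dist u v / ENNReal.ofReal Δ) :
    ∀ u' v' : V, (∃ p : List V, G.IsWalk u' v' p) →
      μ {ω | ¬ G.ReachAvoiding (F ω) u' v'}
        ≤ ENNReal.ofReal β * G.dist u' v' / ENNReal.ofReal Δ := by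
  intro u' v' hreach
  have hfinite : ENNReal.ofReal β / ENNReal.ofReal Δ ≠ ∞ :=
    ENNReal.div_ne_top ENNReal.ofReal_ne_top (ENNReal.ofReal_pos.mpr hΔ).ne'
  simp only [ENNReal.mul_div_right_comm] at hcut ⊢
  exact WDigraph.measure_not_reachAvoiding_le_mul_dist μ F hfinite hcut hreach

/-- **From edge-cutting probabilities to quasipartition probabilities.**
If every edge of `G` is cut by a random cutset `F` with probability at most
`β·d_G(u,v)/Δ`, then for every pair `(u',v')` with `v'` reachable from `u'`, the
quasipartition `R` induced by `F` (i.e. reachability in `G∖F`) fails to relate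
`(u',v')` with probability at most `β·d_G(u',v')/Δ`. -/
theorem induced_quasipartition_probability {V : Type} (G : WDigraph V)
    (Δ β : ℝ) (hΔ : 0 < Δ) (hβ : 0 ≤ β)
    {Ω : Type} [MeasurableSpace Ω] (μ : Measure Ω) [IsProbabilityMeasure μ]
    (F : Ω → Set (V × V)) (hFE : ∀ ω : Ω, ∀ e ∈ F ω, G.Adj e.1 e.2)
    (hcut : ∀ u v : V, G.Adj u v →
      μ {ω | (u, v) ∈ F ω} ≤ ENNReal.ofReal β * G.dist u v / ENNReal.ofReal Δ) :
    ∀ u' v' : V, (∃ p : List V, G.IsWalk u' v' p) →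
      μ {ω | ¬ G.ReachAvoiding (F ω) u' v'}
        ≤ ENNReal.ofReal β * G.dist u' v' / ENNReal.ofReal Δ :=
  induced_quasipartition_probability_general G Δ β hΔ μ F hcut
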